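/- Let A be a p × q real matrix (p ≤ q) whose columns a_j each satisfy max_i a_{ij} > 0, let a_j⁽⁰⁾ = max(a_j, 0) componentwise, and suppose Z₁, …, Z_q are independent nonnegative random variables each satisfying n P(Z_j > b_n z) → z^{−α} for z > 0. Then for the max-linear combination X = (max_{j} a_{1j} Z_j, …, max_j a_{pj} Z_j)ᵀ and any x > 0 (componentwise), n P(X ∈ b_n([0,x]ᶜ)) → Σ_{j=1}^q max_{i=1,…,p} (a_{ij}⁽⁰⁾/xᵢ)^α, which is the limit measure ν([0,x]ᶜ) associated with the discrete angular measure H = Σ_j ‖a_j⁽⁰⁾‖^α δ_{a_j⁽⁰⁾/‖a_j⁽⁰⁾‖}. -/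

import Mathlib

open MeasureTheory Filter Topology

/-! Once `b n > 0`, the vector `X` leaves `b n • [0, x]` exactly when some `Zⱼ` exceeds
`b n / cⱼ`, where `cⱼ = maxᵢ a_{ij}⁽⁰⁾ / xᵢ`. By independence this event has probability
`1 - ∏ⱼ (1 - pₙⱼ)` with `n pₙⱼ → cⱼ ^ α`, and `n (1 - ∏ⱼ (1 - pₙⱼ)) → ∑ⱼ lim n pₙⱼ`. -/

lemma tendsto_zero_of_tendsto_natCast_mul {u : ℕ → ℝ} {L : ℝ}
    (h : Tendsto (fun n : ℕ => (n : ℝ) * u n) atTop (𝓝 L)) : Tendsto u atTop (𝓝 0) := by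
  have h' := h.mul (tendsto_inv_atTop_zero.comp tendsto_natCast_atTop_atTop)
  rw [mul_zero] at h'
  refine h'.congr' ?_
  filter_upwards [eventually_ne_atTop 0] with n hn
  simp only [Function.comp_apply]
  field_simp

theorem tendsto_natCast_mul_one_sub_prod_one_sub {ι : Type*} (s : Finset ι)
    {u : ι → ℕ → ℝ} {L : ι → ℝ}
    (h : ∀ i ∈ s, Tendsto (fun n : ℕ => (n : ℝ) * u i n) atTop (𝓝 (L i))) :
    Tendsto (fun n : ℕ => (n : ℝ) * (1 - ∏ i ∈ s, (1 - u i n))) atTop (𝓝 (∑ i ∈ s, L i)) := by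
  classical
  induction s using Finset.induction_on with
  | empty => simp
  | insert a s ha ih =>
    rw [Finset.forall_mem_insert] at h
    have hsplit : ∀ n : ℕ, (n : ℝ) * (1 - ∏ i ∈ insert a s, (1 - u i n))
        = n * u a n + (1 - u a n) * (n * (1 - ∏ i ∈ s, (1 - u i n))) := fun n => by
      rw [Finset.prod_insert ha]; ring
    simp only [hsplit, Finset.sum_insert ha]
    simpa using h.1.add
      (((tendsto_zero_of_tendsto_natCast_mul h.1).const_sub 1).mul (ih h.2))

namespace ProbabilityTheory

lemma iIndepFun.measureReal_iUnion_preimage {Ω ι : Type*} [Fintype ι] [MeasurableSpace Ω]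
    {μ : Measure Ω} [IsProbabilityMeasure μ] {β : ι → Type*} [∀ i, MeasurableSpace (β i)]
    {X : ∀ i, Ω → β i} (hX : ∀ i, Measurable (X i)) (hind : iIndepFun X μ)
    {s : ∀ i, Set (β i)} (hs : ∀ i, MeasurableSet (s i)) :
    μ.real (⋃ i, X i ⁻¹' s i) = 1 - ∏ i, (1 - μ.real (X i ⁻¹' s i)) := by
  have hinter : μ.real (⋂ i, (X i ⁻¹' s i)ᶜ) = ∏ i, μ.real ((X i ⁻¹' s i)ᶜ) := by
    rw [measureReal_def, hind.meas_iInter (s := fun i => (X i ⁻¹' s i)ᶜ)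
      fun i => ⟨(s i)ᶜ, (hs i).compl, rfl⟩, ENNReal.toReal_prod]
    rfl
  rw [← compl_compl (⋃ i, _), Set.compl_iUnion,
    probReal_compl_eq_one_sub (MeasurableSet.iInter fun i => (hX i (hs i)).compl), hinter]
  simp_rw [probReal_compl_eq_one_sub (hX _ (hs _))]

end ProbabilityTheory

lemma exists_mul_lt_mul_iff_lt_sup'_mul {ι : Type*} {s : Finset ι} (hs : s.Nonempty)
    {a x : ι → ℝ} {b z : ℝ} (hb : 0 < b) (hx : ∀ i ∈ s, 0 < x i) (hz : 0 ≤ z) :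
    (∃ i ∈ s, b * x i < a i * z) ↔ b < s.sup' hs (fun i => max (a i) 0 / x i) * z := by
  constructor
  · rintro ⟨i, hi, hlt⟩
    calc b < a i / x i * z := by rwa [div_mul_eq_mul_div, lt_div_iff₀ (hx i hi)]
      _ ≤ max (a i) 0 / x i * z := by gcongr; exacts [(hx i hi).le, le_max_left _ _]
      _ ≤ _ := by gcongr; exact Finset.le_sup' (fun i => max (a i) 0 / x i) hi
  · intro hlt
    obtain ⟨i, hi, heq⟩ := Finset.exists_mem_eq_sup' hs (fun i => max (a i) 0 / x i)
    rw [heq] at hlt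
    have hai : 0 < a i := by
      by_contra! h
      rw [max_eq_right h, zero_div, zero_mul] at hlt
      exact hb.not_gt hlt
    exact ⟨i, hi, by rwa [max_eq_left hai.le, div_mul_eq_mul_div, lt_div_iff₀ (hx i hi)] at hlt⟩

theorem maxLinear_regular_variation_general
    (p q : ℕ) (α : ℝ)
    (A : Matrix (Fin (p+1)) (Fin (q+1)) ℝ)
    (hA : ∀ j, ∃ i, 0 < A i j)
    (Ω : Type*) [MeasurableSpace Ω] (ℙ : Measure Ω) [IsProbabilityMeasure ℙ]
    (Z : Fin (q+1) → Ω → ℝ)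
    (hZmeas : ∀ j, Measurable (Z j))
    (hZindep : ProbabilityTheory.iIndepFun Z ℙ)
    (hZnonneg : ∀ j ω, 0 ≤ Z j ω)
    (b : ℕ → ℝ) (hb : Tendsto b atTop atTop)
    (hZtail : ∀ j, ∀ z : ℝ, 0 < z →
      Tendsto (fun n : ℕ => (n : ℝ) * (ℙ {ω | b n * z < Z j ω}).toReal)
        atTop (nhds (z ^ (-α))))
    (x : Fin (p+1) → ℝ) (hx : ∀ i, 0 < x i) :
    Tendsto
      (fun n : ℕ => (n : ℝ) *
        (ℙ {ω | ∃ i, b n * x i < (Finset.univ.sup' Finset.univ_nonempty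
            (fun j => A i j * Z j ω))}).toReal)
      atTop
      (nhds (∑ j, (Finset.univ.sup' Finset.univ_nonempty
        (fun i => max (A i j) 0 / x i)) ^ α)) := by
  set c : Fin (q+1) → ℝ := fun j =>
    Finset.univ.sup' Finset.univ_nonempty (fun i => max (A i j) 0 / x i)
  have hc : ∀ j, 0 < c j := fun j => by
    obtain ⟨i, hi⟩ := hA j
    exact (div_pos (lt_max_of_lt_left hi) (hx i)).trans_le
      (Finset.le_sup' (fun i => max (A i j) 0 / x i) (Finset.mem_univ i))
  have hevent : ∀ n, 0 < b n → {ω | ∃ i, b n * x i < Finset.univ.sup' Finset.univ_nonempty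
      (fun j => A i j * Z j ω)} = ⋃ j, Z j ⁻¹' Set.Ioi (b n * (c j)⁻¹) := fun n hbn => by
    ext ω
    simp only [Set.mem_ofPred_eq, Finset.lt_sup'_iff, Set.mem_iUnion, Set.mem_preimage,
      Set.mem_Ioi, ← div_eq_mul_inv, div_lt_iff₀' (hc _), Finset.mem_univ, true_and]
    rw [exists_comm]
    refine exists_congr fun j => ?_
    simpa using exists_mul_lt_mul_iff_lt_sup'_mul Finset.univ_nonempty (a := fun i => A i j)
      hbn (fun i _ => hx i) (hZnonneg j ω)
  have htail : ∀ j, Tendsto (fun n : ℕ => (n : ℝ) * ℙ.real (Z j ⁻¹' Set.Ioi (b n * (c j)⁻¹)))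
      atTop (𝓝 (c j ^ α)) := fun j => by
    have h := hZtail j _ (inv_pos.mpr (hc j))
    rwa [Real.inv_rpow (hc j).le, Real.rpow_neg (hc j).le, inv_inv] at h
  refine (tendsto_natCast_mul_one_sub_prod_one_sub Finset.univ fun j _ => htail j).congr' ?_
  filter_upwards [hb.eventually_gt_atTop 0] with n hbn
  rw [hevent n hbn, ← measureReal_def,
    hZindep.measureReal_iUnion_preimage hZmeas fun _ => measurableSet_Ioi]

/-- for a max-linear combination `Xᵢ = maxⱼ a_{ij} Zⱼ` of
independent regularly varying random variables, for every componentwise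
positive `x`,
`n P(X ∈ b_n [0,x]ᶜ) → Σⱼ maxᵢ (a_{ij}⁽⁰⁾/xᵢ)^α`, the limit measure of
`[0,x]ᶜ` for the discrete angular measure `H = Σⱼ ‖aⱼ⁽⁰⁾‖^α δ_{aⱼ⁽⁰⁾/‖aⱼ⁽⁰⁾‖}`. -/
theorem maxLinear_regular_variation
    (p q : ℕ) (α : ℝ) (hα : 0 < α)
    (A : Matrix (Fin (p+1)) (Fin (q+1)) ℝ)
    (hA : ∀ j, ∃ i, 0 < A i j)
    (Ω : Type*) [MeasurableSpace Ω] (ℙ : Measure Ω) [IsProbabilityMeasure ℙ]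
    (Z : Fin (q+1) → Ω → ℝ)
    (hZmeas : ∀ j, Measurable (Z j))
    (hZindep : ProbabilityTheory.iIndepFun Z ℙ)
    (hZnonneg : ∀ j ω, 0 ≤ Z j ω)
    (b : ℕ → ℝ) (hb : Tendsto b atTop atTop)
    (hZtail : ∀ j, ∀ z : ℝ, 0 < z →
      Tendsto (fun n : ℕ => (n : ℝ) * (ℙ {ω | b n * z < Z j ω}).toReal)
        atTop (nhds (z ^ (-α))))
    (x : Fin (p+1) → ℝ) (hx : ∀ i, 0 < x i) :
    Tendsto
      (fun n : ℕ => (n : ℝ) *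
        (ℙ {ω | ∃ i, b n * x i < (Finset.univ.sup' Finset.univ_nonempty
            (fun j => A i j * Z j ω))}).toReal)
      atTop
      (nhds (∑ j, (Finset.univ.sup' Finset.univ_nonempty
        (fun i => max (A i j) 0 / x i)) ^ α)) :=
  maxLinear_regular_variation_general p q α A hA Ω ℙ Z hZmeas hZindep hZnonneg b hb hZtail x hx
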